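/- The vacuum vector state tr(a) = ⟨a δ_e, δ_e⟩ is a trace on the von Neumann algebra M generated by the semicircular elements L_j + L_j*: for all a, b ∈ M, ⟨(a ∘ b) δ_e, δ_e⟩ = ⟨(b ∘ a) δ_e, δ_e⟩. -/

import Mathlib

/-!
Reversing words conjugates each left creation operator `L_i` into the right creation operator
`R_i : δ_w ↦ δ_{w g_i}`. The right semicircular elements `R_i + R_i*` commute with the left ones
`L_j + L_j*`: the commutators `[L_j*, R_i]` and `[R_i*, L_j]` are both `δ_ij` times the projection
onto `δ_e`, and they cancel. So `R_i + R_i*` lies in the commutant and commutes with every `m ∈ M`;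
as it agrees with `L_i + L_i*` on the vacuum, writing `δ_{w g_i} = (R_i + R_i*) δ_w - R_i* δ_w`
and applying the induction hypothesis to `(L_i + L_i*) m ∈ M` gives, by induction on the length
of `w`, `⟨δ_e, m δ_w⟩ = ⟨δ_{w^rev}, m δ_e⟩` for all `m ∈ M`. Hence
`(m* δ_e)(w) = conj ((m δ_e)(w^rev))`, and `⟨a b δ_e, δ_e⟩ = ∑_w conj ((a δ_e)(w^rev) (b δ_e)(w))`
is symmetric in `a` and `b` after reindexing by `w ↦ w^rev`.
-/

noncomputable section

/-- The Hilbert space `ℓ²(FreeMonoid (Fin N), ℂ)`. -/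
abbrev FMH (N : ℕ) : Type := lp (fun _ : FreeMonoid (Fin N) => ℂ) 2

/-- The standard orthonormal basis vector `δ_w` at the word `w`. -/
noncomputable def delta (N : ℕ) (w : FreeMonoid (Fin N)) : FMH N :=
  letI : DecidableEq (FreeMonoid (Fin N)) := Classical.decEq _
  lp.single 2 w 1

/-- The set of the semicircular generators `L_j + L_j*`, `j = 1, …, N`. -/
def semicircSet (N : ℕ) (L : FreeMonoid (Fin N) → (FMH N →L[ℂ] FMH N)) :
    Set (FMH N →L[ℂ] FMH N) :=
  {x | ∃ j : Fin N, x = L (FreeMonoid.of j) + ContinuousLinearMap.adjoint (L (FreeMonoid.of j))}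

/-- The von Neumann algebra generated by `{L_j + L_j*}`: the double commutant of this
(self-adjoint) set inside the bounded operators on `H`. -/
def vnAlg (N : ℕ) (L : FreeMonoid (Fin N) → (FMH N →L[ℂ] FMH N)) :
    StarSubalgebra ℂ (FMH N →L[ℂ] FMH N) :=
  StarSubalgebra.centralizer ℂ
    ((StarSubalgebra.centralizer ℂ (semicircSet N L) : StarSubalgebra ℂ (FMH N →L[ℂ] FMH N)) :
      Set (FMH N →L[ℂ] FMH N))

open scoped ComplexConjugate ENNReal

namespace FreeMonoid

variable {α : Type*}

theorem reverse_involutive : Function.Involutive (reverse : FreeMonoid α → FreeMonoid α) :=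
  fun _ => reverse_reverse

theorem eq_one_or_exists_eq_mul_of (w : FreeMonoid α) : w = 1 ∨ ∃ w₀ i, w = w₀ * of i := by
  rcases List.eq_nil_or_concat w.toList with h | ⟨w₀, i, h⟩
  · exact Or.inl h
  · exact Or.inr ⟨ofList w₀, i, toList.injective (by simpa using h)⟩

theorem eq_one_or_exists_eq_of_mul (w : FreeMonoid α) : w = 1 ∨ ∃ i w₀, w = of i * w₀ := by
  rcases h : w.toList with _ | ⟨i, w₀⟩
  · exact Or.inl (toList.injective h)
  · exact Or.inr ⟨i, ofList w₀, toList.injective h⟩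

theorem of_mul_ne_one (i : α) (w : FreeMonoid α) : of i * w ≠ 1 := fun h => by
  simpa using congrArg length h

theorem mul_of_ne_one (w : FreeMonoid α) (i : α) : w * of i ≠ 1 := fun h => by
  simpa using congrArg length h

end FreeMonoid

theorem ContinuousLinearMap.isSelfAdjoint_add_adjoint {𝕜 E : Type*} [RCLike 𝕜]
    [NormedAddCommGroup E] [InnerProductSpace 𝕜 E] [CompleteSpace E] (T : E →L[𝕜] E) :
    IsSelfAdjoint (T + adjoint T) :=
  IsSelfAdjoint.add_star_self T

namespace lp

variable {𝕜 : Type*} [RCLike 𝕜] {ι κ : Type*}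

theorem memℓp_comp_equiv (e : ι ≃ κ) (f : lp (fun _ : κ => 𝕜) 2) : Memℓp (f ∘ e) 2 := by
  refine memℓp_gen ?_
  exact (e.summable_iff (f := fun k => ‖f k‖ ^ (2 : ℝ≥0∞).toReal)).2
    ((lp.memℓp f).summable (by norm_num))

theorem norm_comp_equiv (e : ι ≃ κ) (f : lp (fun _ : κ => 𝕜) 2) :
    ‖(⟨f ∘ e, memℓp_comp_equiv e f⟩ : lp (fun _ : ι => 𝕜) 2)‖ = ‖f‖ := by
  have hp : 0 < (2 : ℝ≥0∞).toReal := by norm_num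
  refine Real.rpow_left_injOn hp.ne' (lp.norm_nonneg' _) (lp.norm_nonneg' _) ?_
  simp only [lp.norm_rpow_eq_tsum hp]
  exact e.tsum_eq (fun k => ‖f k‖ ^ (2 : ℝ≥0∞).toReal)

def compEquiv (e : ι ≃ κ) : lp (fun _ : κ => 𝕜) 2 →L[𝕜] lp (fun _ : ι => 𝕜) 2 :=
  LinearMap.mkContinuous
    { toFun f := ⟨f ∘ e, memℓp_comp_equiv e f⟩
      map_add' _ _ := rfl
      map_smul' _ _ := rfl }
    1 fun f => by rw [one_mul]; exact (norm_comp_equiv e f).le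

@[simp]
theorem compEquiv_apply (e : ι ≃ κ) (f : lp (fun _ : κ => 𝕜) 2) (i : ι) :
    compEquiv e f i = f (e i) := rfl

theorem compEquiv_single [DecidableEq ι] [DecidableEq κ] (e : ι ≃ κ) (k : κ) (c : 𝕜) :
    compEquiv e (lp.single 2 k c) = lp.single 2 (e.symm k) c := by
  ext i
  simp only [compEquiv_apply, lp.single_apply, Pi.single_apply, e.eq_symm_apply]

end lp

namespace FMH

open ContinuousLinearMap FreeMonoid

variable {N : ℕ}

theorem delta_apply_self (w : FreeMonoid (Fin N)) : delta N w w = 1 := by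
  simp [delta]

theorem delta_apply_of_ne {w v : FreeMonoid (Fin N)} (h : v ≠ w) : delta N w v = 0 := by
  simp [delta, lp.single_apply, h]

theorem inner_delta_left (w : FreeMonoid (Fin N)) (f : FMH N) :
    inner ℂ (delta N w) f = f w := by
  classical
  simp [delta, lp.inner_single_left]

theorem ext_delta {T U : FMH N →L[ℂ] FMH N} (h : ∀ w, T (delta N w) = U (delta N w)) :
    T = U := by
  classical
  refine lp.ext_continuousLinearMap ENNReal.ofNat_ne_top fun w => ?_
  exact ext_ring (h w)

def rev : FMH N →L[ℂ] FMH N :=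
  lp.compEquiv (FreeMonoid.reverse_involutive.toPerm _)

theorem rev_delta (w : FreeMonoid (Fin N)) : rev (delta N w) = delta N w.reverse := by
  classical
  exact lp.compEquiv_single _ w (1 : ℂ)

section BasisMap

variable {T : FMH N →L[ℂ] FMH N} {φ : FreeMonoid (Fin N) → FreeMonoid (Fin N)}

theorem adjoint_delta_apply (hT : ∀ v, T (delta N v) = delta N (φ v)) (u v : FreeMonoid (Fin N)) :
    adjoint T (delta N u) v = delta N u (φ v) := by
  rw [← inner_delta_left, adjoint_inner_right, hT, inner_delta_left]

theorem adjoint_delta_map (hT : ∀ v, T (delta N v) = delta N (φ v)) (hφ : φ.Injective)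
    (v : FreeMonoid (Fin N)) : adjoint T (delta N (φ v)) = delta N v := by
  refine lp.ext (funext fun v' => ?_)
  rw [adjoint_delta_apply hT]
  by_cases h : v' = v
  · rw [h, delta_apply_self, delta_apply_self]
  · rw [delta_apply_of_ne (hφ.ne h), delta_apply_of_ne h]

theorem adjoint_delta_of_notMem_range (hT : ∀ v, T (delta N v) = delta N (φ v))
    {u : FreeMonoid (Fin N)} (hu : u ∉ Set.range φ) : adjoint T (delta N u) = 0 := by
  refine lp.ext (funext fun v => ?_)
  rw [adjoint_delta_apply hT, delta_apply_of_ne fun h => hu ⟨v, h⟩]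
  rfl

end BasisMap

section Creation

variable {i j : Fin N} {Lj R : FMH N →L[ℂ] FMH N}

theorem adjoint_leftCreation_delta_one (hL : ∀ h, Lj (delta N h) = delta N (of j * h)) :
    adjoint Lj (delta N 1) = 0 :=
  adjoint_delta_of_notMem_range hL fun ⟨h, hh⟩ => of_mul_ne_one j h hh

theorem adjoint_leftCreation_delta_of_mul (hL : ∀ h, Lj (delta N h) = delta N (of j * h))
    (c : Fin N) (t : FreeMonoid (Fin N)) :
    adjoint Lj (delta N (of c * t)) = if c = j then delta N t else 0 := by
  split_ifs with hc
  · exact hc ▸ adjoint_delta_map hL (mul_right_injective _) t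
  · refine adjoint_delta_of_notMem_range hL fun ⟨h, hh⟩ => hc ?_
    have := congrArg toList hh
    simp only [toList_of_mul, List.cons.injEq] at this
    exact this.1.symm

theorem exists_rightCreation (hL : ∀ h, Lj (delta N h) = delta N (of j * h)) :
    ∃ R : FMH N →L[ℂ] FMH N, ∀ h, R (delta N h) = delta N (h * of j) :=
  ⟨rev * Lj * rev, fun h => by
    rw [mul_apply_eq_comp, mul_apply_eq_comp, rev_delta, hL, rev_delta, reverse_mul,
      reverse_reverse, reverse_of]⟩

theorem commute_leftCreation_rightCreation (hL : ∀ h, Lj (delta N h) = delta N (of j * h))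
    (hR : ∀ h, R (delta N h) = delta N (h * of i)) : Commute Lj R :=
  ext_delta fun h => by rw [mul_apply_eq_comp, mul_apply_eq_comp, hL, hR, hR, hL, mul_assoc]

def vacuumProj : FMH N →L[ℂ] FMH N := InnerProductSpace.rankOne ℂ (delta N 1) (delta N 1)

theorem vacuumProj_delta (h : FreeMonoid (Fin N)) :
    vacuumProj (delta N h) = delta N h 1 • delta N 1 := by
  rw [vacuumProj, InnerProductSpace.rankOne_apply, inner_delta_left]

theorem adjoint_leftCreation_mul_rightCreation (hL : ∀ h, Lj (delta N h) = delta N (of j * h))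
    (hR : ∀ h, R (delta N h) = delta N (h * of i)) :
    adjoint Lj * R = R * adjoint Lj + if i = j then vacuumProj else 0 := by
  refine ext_delta fun h => ?_
  rcases eq_one_or_exists_eq_of_mul h with rfl | ⟨c, t, rfl⟩
  · rw [mul_apply_eq_comp, hR, one_mul, ← mul_one (of i), adjoint_leftCreation_delta_of_mul hL,
      add_apply, mul_apply_eq_comp, adjoint_leftCreation_delta_one hL, map_zero, zero_add]
    split_ifs
    · rw [vacuumProj_delta, delta_apply_self, one_smul]
    · rfl
  · have hP : vacuumProj (delta N (of c * t)) = 0 := by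
      rw [vacuumProj_delta, delta_apply_of_ne (of_mul_ne_one c t).symm, zero_smul]
    rw [mul_apply_eq_comp, hR, mul_assoc, adjoint_leftCreation_delta_of_mul hL, add_apply,
      mul_apply_eq_comp, adjoint_leftCreation_delta_of_mul hL]
    split_ifs <;> simp [hR, hP]

theorem commute_semicircular (hL : ∀ h, Lj (delta N h) = delta N (of j * h))
    (hR : ∀ h, R (delta N h) = delta N (h * of i)) :
    Commute (Lj + adjoint Lj) (R + adjoint R) := by
  have hP : star (if i = j then vacuumProj else 0 : FMH N →L[ℂ] FMH N) =
      if i = j then vacuumProj else 0 := by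
    split_ifs
    · rw [vacuumProj, star_eq_adjoint, InnerProductSpace.adjoint_rankOne]
    · exact star_zero _
  have h₁ : Lj * R = R * Lj := commute_leftCreation_rightCreation hL hR
  have h₂ := adjoint_leftCreation_mul_rightCreation hL hR
  have h₁' : adjoint R * adjoint Lj = adjoint Lj * adjoint R := by
    simpa only [star_mul, star_eq_adjoint] using congrArg star h₁
  have h₂' : adjoint R * Lj = Lj * adjoint R + if i = j then vacuumProj else 0 := by
    simpa only [star_mul, star_add, hP, star_eq_adjoint, adjoint_adjoint] using congrArg star h₂
  show (Lj + adjoint Lj) * (R + adjoint R) = (R + adjoint R) * (Lj + adjoint Lj)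
  simp only [add_mul, mul_add]
  rw [h₁, h₂, ← h₁', h₂']
  abel

end Creation

section VonNeumann

variable {L : FreeMonoid (Fin N) → (FMH N →L[ℂ] FMH N)} {m : FMH N →L[ℂ] FMH N}

theorem semicircular_mem_vnAlg (j : Fin N) : L (of j) + adjoint (L (of j)) ∈ vnAlg N L :=
  StarAlgebra.adjoin_le_centralizer_centralizer ℂ _ (StarAlgebra.subset_adjoin ℂ _ ⟨j, rfl⟩)

theorem rightSemicircular_mem_centralizer (hL : ∀ w h, L w (delta N h) = delta N (w * h))
    {i : Fin N} {R : FMH N →L[ℂ] FMH N} (hR : ∀ h, R (delta N h) = delta N (h * of i)) :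
    R + adjoint R ∈ StarSubalgebra.centralizer ℂ (semicircSet N L) := by
  rw [StarSubalgebra.mem_centralizer_iff]
  rintro _ ⟨j, rfl⟩
  rw [(isSelfAdjoint_add_adjoint (L (of j))).star_eq]
  exact ⟨(commute_semicircular (hL (of j)) hR).eq, (commute_semicircular (hL (of j)) hR).eq⟩

theorem inner_vacuum_apply_rightSemicircular (hL : ∀ w h, L w (delta N h) = delta N (w * h))
    {i : Fin N} {R : FMH N →L[ℂ] FMH N} (hR : ∀ h, R (delta N h) = delta N (h * of i))
    (hm : m ∈ vnAlg N L) (x : FMH N) :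
    inner ℂ (delta N 1) (m ((R + adjoint R) x)) =
      inner ℂ (delta N 1) (((L (of i) + adjoint (L (of i))) * m) x) := by
  have hc : (R + adjoint R) * m = m * (R + adjoint R) :=
    ((StarSubalgebra.mem_centralizer_iff ℂ).1 hm _ (rightSemicircular_mem_centralizer hL hR)).1
  have hvac : (R + adjoint R) (delta N 1) = (L (of i) + adjoint (L (of i))) (delta N 1) := by
    rw [add_apply, add_apply, hR, hL, adjoint_leftCreation_delta_one (hL (of i)),
      adjoint_delta_of_notMem_range hR fun ⟨h, hh⟩ => mul_of_ne_one h i hh, one_mul, mul_one]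
  calc inner ℂ (delta N 1) (m ((R + adjoint R) x))
      = inner ℂ (delta N 1) ((R + adjoint R) (m x)) := by
        rw [← mul_apply_eq_comp m, ← hc, mul_apply_eq_comp]
    _ = inner ℂ ((R + adjoint R) (delta N 1)) (m x) :=
        ((isSelfAdjoint_add_adjoint R).isSymmetric _ _).symm
    _ = inner ℂ (delta N 1) (((L (of i) + adjoint (L (of i))) * m) x) := by
        rw [hvac, mul_apply_eq_comp]
        exact (isSelfAdjoint_add_adjoint _).isSymmetric _ _

theorem inner_vacuum_apply_delta (hL : ∀ w h, L w (delta N h) = delta N (w * h))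
    (hm : m ∈ vnAlg N L) (w : FreeMonoid (Fin N)) :
    inner ℂ (delta N 1) (m (delta N w)) = inner ℂ (delta N w.reverse) (m (delta N 1)) := by
  choose R hR using fun i => exists_rightCreation (hL (of i))
  induction hn : w.length using Nat.strong_induction_on generalizing w m with
  | _ n ih =>
  rcases eq_one_or_exists_eq_mul_of w with rfl | ⟨w₀, i, rfl⟩
  · rfl
  have hlt : w₀.length < n := by simp [← hn, length_mul, length_of]
  have hcorr : inner ℂ (delta N 1) (m (adjoint (R i) (delta N w₀))) =
      inner ℂ (adjoint (L (of i)) (delta N w₀.reverse)) (m (delta N 1)) := by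
    by_cases hw₀ : ∃ w₁, w₁ * of i = w₀
    · obtain ⟨w₁, rfl⟩ := hw₀
      rw [adjoint_delta_map (hR i) (mul_left_injective _), reverse_mul, reverse_of,
        adjoint_leftCreation_delta_of_mul (hL (of i)), if_pos rfl,
        ih _ (by simp [← hn, length_mul, length_of]) hm w₁ rfl]
    · have hrev : w₀.reverse ∉ Set.range (of i * ·) := fun ⟨u, hu⟩ =>
        hw₀ ⟨u.reverse, by
          rw [← reverse_of i, ← reverse_mul, show of i * u = _ from hu, reverse_reverse]⟩
      rw [adjoint_delta_of_notMem_range (hR i) hw₀, adjoint_delta_of_notMem_range (hL (of i)) hrev,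
        map_zero, inner_zero_right, inner_zero_left]
  calc inner ℂ (delta N 1) (m (delta N (w₀ * of i)))
      = inner ℂ (delta N 1) (m ((R i + adjoint (R i)) (delta N w₀))) -
          inner ℂ (delta N 1) (m (adjoint (R i) (delta N w₀))) := by
        rw [← inner_sub_right, ← map_sub, add_apply, add_sub_cancel_right, hR]
    _ = inner ℂ ((L (of i) + adjoint (L (of i))) (delta N w₀.reverse)) (m (delta N 1)) -
          inner ℂ (adjoint (L (of i)) (delta N w₀.reverse)) (m (delta N 1)) := by
        rw [inner_vacuum_apply_rightSemicircular hL (hR i) hm,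
          ih _ hlt (mul_mem (semicircular_mem_vnAlg i) hm) w₀ rfl, hcorr, mul_apply_eq_comp]
        exact congrArg (· - _) ((isSelfAdjoint_add_adjoint _).isSymmetric _ _).symm
    _ = inner ℂ (delta N (w₀ * of i).reverse) (m (delta N 1)) := by
        rw [add_apply, inner_add_left, add_sub_cancel_right, hL, reverse_mul, reverse_of]

theorem adjoint_apply_vacuum (hL : ∀ w h, L w (delta N h) = delta N (w * h))
    (hm : m ∈ vnAlg N L) (w : FreeMonoid (Fin N)) :
    adjoint m (delta N 1) w = conj (m (delta N 1) w.reverse) := by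
  rw [← inner_delta_left, adjoint_inner_right, ← inner_conj_symm, inner_vacuum_apply_delta hL hm,
    inner_delta_left]

theorem inner_comp_apply_vacuum (hL : ∀ w h, L w (delta N h) = delta N (w * h))
    (hm : m ∈ vnAlg N L) (k : FMH N →L[ℂ] FMH N) :
    inner ℂ ((m.comp k) (delta N 1)) (delta N 1) =
      ∑' w, conj (m (delta N 1) w.reverse * k (delta N 1) w) := by
  rw [comp_apply, ← adjoint_inner_right, lp.inner_eq_tsum]
  refine tsum_congr fun w => ?_
  rw [adjoint_apply_vacuum hL hm, RCLike.inner_apply', map_mul, mul_comm]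

end VonNeumann

end FMH

open FMH in
theorem vacuum_state_is_trace_general (N : ℕ)
    (L : FreeMonoid (Fin N) → (FMH N →L[ℂ] FMH N))
    (hL : ∀ w h : FreeMonoid (Fin N), L w (delta N h) = delta N (w * h))
    (a b : FMH N →L[ℂ] FMH N) (ha : a ∈ vnAlg N L) (hb : b ∈ vnAlg N L) :
    (inner ℂ ((a.comp b) (delta N 1)) (delta N 1) : ℂ) =
      (inner ℂ ((b.comp a) (delta N 1)) (delta N 1) : ℂ) := by
  rw [inner_comp_apply_vacuum hL ha, inner_comp_apply_vacuum hL hb,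
    ← (FreeMonoid.reverse_involutive.toPerm _).tsum_eq]
  refine tsum_congr fun w => ?_
  rw [Function.Involutive.coe_toPerm, FreeMonoid.reverse_reverse, mul_comm]

/-- The vacuum vector state is a trace on the von Neumann algebra `M` generated by the
semicircular elements: `⟨(a∘b) δ_e, δ_e⟩ = ⟨(b∘a) δ_e, δ_e⟩` for all `a, b ∈ M`. -/
theorem vacuum_state_is_trace (N : ℕ) (hN : 0 < N)
    (L : FreeMonoid (Fin N) → (FMH N →L[ℂ] FMH N))
    (hL : ∀ w h : FreeMonoid (Fin N), L w (delta N h) = delta N (w * h))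
    (a b : FMH N →L[ℂ] FMH N) (ha : a ∈ vnAlg N L) (hb : b ∈ vnAlg N L) :
    (inner ℂ ((a.comp b) (delta N 1)) (delta N 1) : ℂ) =
      (inner ℂ ((b.comp a) (delta N 1)) (delta N 1) : ℂ) :=
  vacuum_state_is_trace_general N L hL a b ha hb
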